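/- arXiv:1204.5458 — 4 statements merged into one kernel-verified Lean document; each statement's English description precedes it below -/
import Mathlib

section
/- Let ν > 0. For φ ∈ H_{ν,0}(ℝ), define (Jφ)(x) = ∫_{-∞}^x φ(t) dt. Then J is a well-defined bounded linear operator on H_{ν,0}(ℝ) with operator norm exactly 1/ν. -/
/-!
Splitting `|f t| = (|f t| e^{-νt/2}) e^{νt/2}`, Cauchy–Schwarz gives
`|Jf(x)|² ≤ (e^{νx}/ν) ∫_{t ≤ x} |f t|² e^{-νt} dt`. Integrating against `e^{-2νx}` and exchanging
the order of integration (Schur's test) yields `‖Jf‖ ≤ ‖f‖/ν`; the same estimate with `e^{-2νt}`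
in place of `e^{-νt}` shows that `f` is integrable on every `(-∞, x]`.

For the reverse inequality, `g_a(t) = e^{at} 1_{t ≤ 0}` lies in `H_{ν,0}` for every `a > ν`, and
`J g_a = g_a / a` on `(-∞, 0]`, so `‖J‖ ≥ 1/a`; let `a ↓ ν`.
-/

open MeasureTheory Complex

/-- The exponentially weighted measure `e^{-2νx} dx` on `ℝ`;
`Lp ℂ 2 (wMeasure ν)` is the space `H_{ν,0}(ℝ)`. -/
noncomputable def wMeasure (ν : ℝ) : Measure ℝ :=
  (volume : Measure ℝ).withDensity fun x => ENNReal.ofReal (Real.exp (-2 * ν * x))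

open Set Filter Topology
open scoped ENNReal

theorem ENNReal.sq_lintegral_mul_le {α : Type*} [MeasurableSpace α] {μ : Measure α}
    {f g : α → ℝ≥0∞} (hf : AEMeasurable f μ) (hg : AEMeasurable g μ) :
    (∫⁻ a, f a * g a ∂μ) ^ 2 ≤ (∫⁻ a, f a ^ 2 ∂μ) * ∫⁻ a, g a ^ 2 ∂μ := by
  have sq_sqrt (x : ℝ≥0∞) : (x ^ (1 / 2 : ℝ)) ^ 2 = x := by
    rw [← ENNReal.rpow_two, ← ENNReal.rpow_mul]; norm_num
  have h := ENNReal.lintegral_mul_le_Lp_mul_Lq μ .two_two hf hg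
  simp only [ENNReal.rpow_two, Pi.mul_apply] at h
  calc _ ≤ ((∫⁻ a, f a ^ 2 ∂μ) ^ (1 / 2 : ℝ) * (∫⁻ a, g a ^ 2 ∂μ) ^ (1 / 2 : ℝ)) ^ 2 := by gcongr
    _ = _ := by rw [mul_pow, sq_sqrt, sq_sqrt]

theorem sq_eLpNorm_two {α E : Type*} [MeasurableSpace α] {μ : Measure α}
    [NormedAddCommGroup E] (f : α → E) :
    eLpNorm f 2 μ ^ 2 = ∫⁻ x, ‖f x‖ₑ ^ 2 ∂μ := by
  simpa using eLpNorm_nnreal_pow_eq_lintegral (μ := μ) (f := f) (p := 2) two_ne_zero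

noncomputable def expWeight (c t : ℝ) : ℝ≥0∞ := ENNReal.ofReal (Real.exp (c * t))

@[fun_prop]
theorem measurable_expWeight (c : ℝ) : Measurable (expWeight c) := by
  unfold expWeight; fun_prop

theorem expWeight_add (a b t : ℝ) : expWeight (a + b) t = expWeight a t * expWeight b t := by
  simp only [expWeight, add_mul, Real.exp_add, ENNReal.ofReal_mul (Real.exp_nonneg _)]

theorem expWeight_zero (t : ℝ) : expWeight 0 t = 1 := by simp [expWeight]

theorem expWeight_sq (c t : ℝ) : expWeight c t ^ 2 = expWeight (2 * c) t := by
  rw [two_mul, expWeight_add, pow_two]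

theorem setLIntegral_expWeight_Iic {c : ℝ} (hc : 0 < c) (x : ℝ) :
    ∫⁻ t in Iic x, expWeight c t = expWeight c x * ENNReal.ofReal c⁻¹ := by
  simp only [expWeight]
  rw [← ofReal_integral_eq_lintegral_ofReal (integrableOn_exp_mul_Iic hc x)
    (.of_forall fun _ => (Real.exp_pos _).le), integral_exp_mul_Iic hc,
    div_eq_mul_inv, ENNReal.ofReal_mul (Real.exp_nonneg _)]

theorem setLIntegral_expWeight_Ici {c : ℝ} (hc : c < 0) (x : ℝ) :
    ∫⁻ t in Ici x, expWeight c t = expWeight c x * ENNReal.ofReal (-c)⁻¹ := by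
  simp only [expWeight]
  rw [← setLIntegral_congr Ioi_ae_eq_Ici, ← ofReal_integral_eq_lintegral_ofReal
    (integrableOn_exp_mul_Ioi hc x) (.of_forall fun _ => (Real.exp_pos _).le),
    integral_exp_mul_Ioi hc, neg_div, ← div_neg, div_eq_mul_inv,
    ENNReal.ofReal_mul (Real.exp_nonneg _)]

theorem lintegral_wMeasure (ν : ℝ) (g : ℝ → ℝ≥0∞) :
    ∫⁻ x, g x ∂wMeasure ν = ∫⁻ x, expWeight (-2 * ν) x * g x :=
  lintegral_withDensity_eq_lintegral_mul_non_measurable _ (measurable_expWeight _)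
    (.of_forall fun _ => ENNReal.ofReal_lt_top) g

theorem sq_eLpNorm_wMeasure {E : Type*} [NormedAddCommGroup E] (ν : ℝ) (f : ℝ → E) :
    eLpNorm f 2 (wMeasure ν) ^ 2 = ∫⁻ x, expWeight (-2 * ν) x * ‖f x‖ₑ ^ 2 := by
  rw [sq_eLpNorm_two, lintegral_wMeasure]

theorem volume_absolutelyContinuous_wMeasure (ν : ℝ) : volume ≪ wMeasure ν :=
  withDensity_absolutelyContinuous' (measurable_expWeight _).aemeasurable
    (.of_forall fun _ => (ENNReal.ofReal_pos.mpr (Real.exp_pos _)).ne')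

theorem sq_setLIntegral_Iic_enorm_le {E : Type*} [NormedAddCommGroup E] {f : ℝ → E}
    (hf : AEStronglyMeasurable f) {c : ℝ} (hc : 0 < c) (x : ℝ) :
    (∫⁻ t in Iic x, ‖f t‖ₑ) ^ 2 ≤
      (∫⁻ t in Iic x, expWeight (-c) t * ‖f t‖ₑ ^ 2) * (expWeight c x * ENNReal.ofReal c⁻¹) := by
  have split (t : ℝ) : ‖f t‖ₑ = expWeight (-c / 2) t * ‖f t‖ₑ * expWeight (c / 2) t := by
    rw [mul_right_comm, ← expWeight_add, neg_div, neg_add_cancel, expWeight_zero, one_mul]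
  calc (∫⁻ t in Iic x, ‖f t‖ₑ) ^ 2
      = (∫⁻ t in Iic x, expWeight (-c / 2) t * ‖f t‖ₑ * expWeight (c / 2) t) ^ 2 := by
        congr 1; exact lintegral_congr fun t => split t
    _ ≤ (∫⁻ t in Iic x, (expWeight (-c / 2) t * ‖f t‖ₑ) ^ 2) *
          ∫⁻ t in Iic x, expWeight (c / 2) t ^ 2 :=
        ENNReal.sq_lintegral_mul_le
          ((measurable_expWeight _).aemeasurable.mul hf.enorm).restrict
          (measurable_expWeight _).aemeasurable
    _ = _ := by
        simp only [mul_pow, expWeight_sq, mul_div_cancel₀ _ (two_ne_zero' ℝ),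
          setLIntegral_expWeight_Iic hc]

theorem lintegral_mul_setLIntegral_Iic {μ : Measure ℝ} [SFinite μ] {w h : ℝ → ℝ≥0∞}
    (hw : AEMeasurable w μ) (hh : AEMeasurable h μ) :
    ∫⁻ x, w x * ∫⁻ t in Iic x, h t ∂μ ∂μ = ∫⁻ t, h t * ∫⁻ x in Ici t, w x ∂μ ∂μ := by
  set F : ℝ × ℝ → ℝ≥0∞ := {p | p.2 ≤ p.1}.indicator fun p => w p.1 * h p.2
  have hF : AEMeasurable F (μ.prod μ) :=
    (hw.comp_fst.mul hh.comp_snd).indicator (measurableSet_le measurable_snd measurable_fst)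
  calc ∫⁻ x, w x * ∫⁻ t in Iic x, h t ∂μ ∂μ = ∫⁻ x, ∫⁻ t, F (x, t) ∂μ ∂μ := by
        refine lintegral_congr fun x => ?_
        rw [← lintegral_indicator measurableSet_Iic,
          ← lintegral_const_mul'' _ (hh.indicator measurableSet_Iic)]
        congr 1; ext t
        simp [F, indicator_apply]
    _ = ∫⁻ t, ∫⁻ x, F (x, t) ∂μ ∂μ := lintegral_lintegral_swap hF
    _ = ∫⁻ t, h t * ∫⁻ x in Ici t, w x ∂μ ∂μ := by
        refine lintegral_congr fun t => ?_
        rw [← lintegral_indicator measurableSet_Ici,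
          ← lintegral_const_mul'' _ (hw.indicator measurableSet_Ici)]
        congr 1; ext x
        simp [F, indicator_apply, mul_comm]

noncomputable def primitiveIic {E : Type*} [NormedAddCommGroup E] [NormedSpace ℝ E]
    (f : ℝ → E) (x : ℝ) : E :=
  ∫ t in Iic x, f t

theorem eLpNorm_primitiveIic_le {E : Type*} [NormedAddCommGroup E] [NormedSpace ℝ E] {ν : ℝ}
    (hν : 0 < ν) {f : ℝ → E} (hf : AEStronglyMeasurable f) :
    eLpNorm (primitiveIic f) 2 (wMeasure ν) ≤
      ENNReal.ofReal ν⁻¹ * eLpNorm f 2 (wMeasure ν) := by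
  have weight_split (t : ℝ) : expWeight (-2 * ν) t = expWeight (-ν) t * expWeight (-ν) t := by
    rw [← expWeight_add]; ring_nf
  have weight_cancel (t : ℝ) : expWeight (-ν) t * expWeight ν t = 1 := by
    rw [← expWeight_add, neg_add_cancel, expWeight_zero]
  set A : ℝ → ℝ≥0∞ := fun x => ∫⁻ t in Iic x, expWeight (-ν) t * ‖f t‖ₑ ^ 2
  have hA (x : ℝ) : ‖∫ t in Iic x, f t‖ₑ ^ 2 ≤ A x * (expWeight ν x * ENNReal.ofReal ν⁻¹) :=
    (pow_le_pow_left' (enorm_integral_le_lintegral_enorm _) 2).trans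
      (sq_setLIntegral_Iic_enorm_le hf hν x)
  rw [← ENNReal.pow_le_pow_left_iff two_ne_zero]
  calc eLpNorm (primitiveIic f) 2 (wMeasure ν) ^ 2
      ≤ ∫⁻ x, expWeight (-2 * ν) x * (A x * (expWeight ν x * ENNReal.ofReal ν⁻¹)) := by
        rw [sq_eLpNorm_wMeasure]; gcongr with x; exact hA x
    _ = ENNReal.ofReal ν⁻¹ * ∫⁻ x, expWeight (-ν) x * A x := by
        rw [← lintegral_const_mul' _ _ ENNReal.ofReal_ne_top]
        congr 1; ext x
        rw [weight_split, ← one_mul (_ * A x), ← weight_cancel x]; ring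
    _ = ENNReal.ofReal ν⁻¹ *
          ∫⁻ t, expWeight (-ν) t * ‖f t‖ₑ ^ 2 * (expWeight (-ν) t * ENNReal.ofReal ν⁻¹) := by
        rw [lintegral_mul_setLIntegral_Iic (h := fun t => expWeight (-ν) t * ‖f t‖ₑ ^ 2)
          (measurable_expWeight _).aemeasurable
          ((measurable_expWeight _).aemeasurable.mul (hf.enorm.pow_const 2))]
        simp only [setLIntegral_expWeight_Ici (neg_lt_zero.mpr hν), neg_neg]
    _ = (ENNReal.ofReal ν⁻¹ * eLpNorm f 2 (wMeasure ν)) ^ 2 := by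
        rw [mul_pow, sq_eLpNorm_wMeasure, ← lintegral_const_mul' _ _ ENNReal.ofReal_ne_top,
          ← lintegral_const_mul' _ _ (by finiteness)]
        congr 1; ext t
        rw [weight_split]; ring

theorem integrableOn_Iic_of_memLp_wMeasure {E : Type*} [NormedAddCommGroup E] {ν : ℝ}
    (hν : 0 < ν) {f : ℝ → E} (hf : MemLp f 2 (wMeasure ν)) (x : ℝ) : IntegrableOn f (Iic x) := by
  have hfm : AEStronglyMeasurable f := hf.1.mono_ac (volume_absolutelyContinuous_wMeasure ν)
  have hweighted : ∫⁻ t in Iic x, expWeight (-(2 * ν)) t * ‖f t‖ₑ ^ 2 < ∞ := by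
    refine lt_of_le_of_lt ?_ (ENNReal.pow_lt_top (n := 2) hf.eLpNorm_lt_top)
    rw [sq_eLpNorm_wMeasure, ← neg_mul]
    exact setLIntegral_le_lintegral _ _
  refine ⟨hfm.restrict, ENNReal.pow_lt_top_iff.1 ?_ |>.resolve_right two_ne_zero⟩
  exact (sq_setLIntegral_Iic_enorm_le hfm (by positivity) x).trans_lt
    (ENNReal.mul_lt_top hweighted (ENNReal.mul_lt_top ENNReal.ofReal_lt_top ENNReal.ofReal_lt_top))

section primitiveIic

variable {E : Type*} [NormedAddCommGroup E] [NormedSpace ℝ E]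

theorem primitiveIic_congr_ae {f g : ℝ → E} (h : f =ᵐ[volume] g) :
    primitiveIic f = primitiveIic g :=
  funext fun _ => integral_congr_ae (ae_restrict_of_ae h)

theorem primitiveIic_add {f g : ℝ → E} (hf : ∀ x, IntegrableOn f (Iic x))
    (hg : ∀ x, IntegrableOn g (Iic x)) : primitiveIic (f + g) = primitiveIic f + primitiveIic g :=
  funext fun x => integral_add (hf x) (hg x)

theorem primitiveIic_smul {𝕜 : Type*} [NormedField 𝕜] [NormedSpace 𝕜 E] [SMulCommClass ℝ 𝕜 E]
    (c : 𝕜) (f : ℝ → E) : primitiveIic (c • f) = c • primitiveIic f :=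
  funext fun _ => integral_smul c _

theorem continuous_primitiveIic {f : ℝ → E} (hf : ∀ x, IntegrableOn f (Iic x)) :
    Continuous (primitiveIic f) :=
  continuous_iff_continuousAt.2 fun x =>
    (hf (x + 1)).continuousOn_Iic_primitive_Iic.continuousAt (Iic_mem_nhds (lt_add_one x))

theorem memLp_primitiveIic {ν : ℝ} (hν : 0 < ν) {f : ℝ → E} (hf : MemLp f 2 (wMeasure ν)) :
    MemLp (primitiveIic f) 2 (wMeasure ν) :=
  ⟨(continuous_primitiveIic (integrableOn_Iic_of_memLp_wMeasure hν hf)).aestronglyMeasurable,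
    (eLpNorm_primitiveIic_le hν (hf.1.mono_ac (volume_absolutelyContinuous_wMeasure ν))).trans_lt
      (ENNReal.mul_lt_top ENNReal.ofReal_lt_top hf.eLpNorm_lt_top)⟩

end primitiveIic

section Operator

variable {ν : ℝ} (hν : 0 < ν)

theorem norm_toLp_primitiveIic_le (f : Lp ℂ 2 (wMeasure ν)) :
    ‖(memLp_primitiveIic hν (Lp.memLp f)).toLp‖ ≤ ν⁻¹ * ‖f‖ := by
  rw [Lp.norm_toLp, Lp.norm_def, ← ENNReal.toReal_ofReal (inv_nonneg.2 hν.le),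
    ← ENNReal.toReal_mul]
  exact ENNReal.toReal_mono (ENNReal.mul_ne_top ENNReal.ofReal_ne_top (Lp.eLpNorm_ne_top f))
    (eLpNorm_primitiveIic_le hν
      ((Lp.aestronglyMeasurable f).mono_ac (volume_absolutelyContinuous_wMeasure ν)))

noncomputable def primitiveIicCLM : Lp ℂ 2 (wMeasure ν) →L[ℂ] Lp ℂ 2 (wMeasure ν) :=
  LinearMap.mkContinuous
    { toFun f := (memLp_primitiveIic hν (Lp.memLp f)).toLp
      map_add' f g := by
        have hint (h : Lp ℂ 2 (wMeasure ν)) := integrableOn_Iic_of_memLp_wMeasure hν (Lp.memLp h)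
        rw [← MemLp.toLp_add]
        refine MemLp.toLp_congr _ _ (.of_eq ?_)
        rw [primitiveIic_congr_ae ((volume_absolutelyContinuous_wMeasure ν).ae_le
          (Lp.coeFn_add f g)), primitiveIic_add (hint f) (hint g)]
      map_smul' c f := by
        rw [RingHom.id_apply, ← MemLp.toLp_const_smul]
        refine MemLp.toLp_congr _ _ (.of_eq ?_)
        rw [primitiveIic_congr_ae ((volume_absolutelyContinuous_wMeasure ν).ae_le
          (Lp.coeFn_smul c f)), primitiveIic_smul] }
    ν⁻¹ (norm_toLp_primitiveIic_le hν)

theorem coeFn_primitiveIicCLM (f : Lp ℂ 2 (wMeasure ν)) :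
    primitiveIicCLM hν f =ᵐ[wMeasure ν] primitiveIic f :=
  (memLp_primitiveIic hν (Lp.memLp f)).coeFn_toLp

theorem norm_primitiveIicCLM_apply (f : Lp ℂ 2 (wMeasure ν)) :
    ‖primitiveIicCLM hν f‖ = (eLpNorm (primitiveIic f) 2 (wMeasure ν)).toReal :=
  Lp.norm_toLp _ (memLp_primitiveIic hν (Lp.memLp f))

theorem norm_primitiveIicCLM_le : ‖primitiveIicCLM hν‖ ≤ ν⁻¹ :=
  LinearMap.mkContinuous_norm_le _ (inv_nonneg.2 hν.le) _

end Operator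

noncomputable def truncatedExp (a : ℝ) : ℝ → ℂ :=
  (Iic 0).indicator fun t => Complex.exp (a * t)

theorem enorm_exp_ofReal_mul (a t : ℝ) : ‖Complex.exp (a * t)‖ₑ = expWeight a t := by
  rw [← ofReal_norm, Complex.norm_exp]
  simp [expWeight]

theorem sq_eLpNorm_truncatedExp {ν a : ℝ} (h : ν < a) :
    eLpNorm (truncatedExp a) 2 (wMeasure ν) ^ 2 = ENNReal.ofReal (2 * (a - ν))⁻¹ := by
  have hpointwise : (fun x => expWeight (-2 * ν) x * ‖truncatedExp a x‖ₑ ^ 2) =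
      (Iic 0).indicator (expWeight (2 * (a - ν))) := by
    ext x
    by_cases hx : x ≤ 0
    · simp only [truncatedExp, indicator_of_mem (mem_Iic.2 hx), enorm_exp_ofReal_mul,
        expWeight_sq, ← expWeight_add]
      ring_nf
    · simp [truncatedExp, hx]
  rw [sq_eLpNorm_wMeasure, hpointwise, lintegral_indicator measurableSet_Iic,
    setLIntegral_expWeight_Iic (by linarith), expWeight, mul_zero, Real.exp_zero,
    ENNReal.ofReal_one, one_mul]

theorem memLp_truncatedExp {ν a : ℝ} (h : ν < a) : MemLp (truncatedExp a) 2 (wMeasure ν) := by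
  refine ⟨(Measurable.indicator (by fun_prop) measurableSet_Iic).aestronglyMeasurable, ?_⟩
  refine ENNReal.pow_lt_top_iff.1 ?_ |>.resolve_right two_ne_zero
  rw [sq_eLpNorm_truncatedExp h]
  exact ENNReal.ofReal_lt_top

theorem indicator_primitiveIic_truncatedExp {a : ℝ} (ha : 0 < a) :
    (Iic 0).indicator (primitiveIic (truncatedExp a)) = (a : ℂ)⁻¹ • truncatedExp a := by
  ext x
  by_cases hx : x ≤ 0
  · have hprim : primitiveIic (truncatedExp a) x = ∫ t in Iic x, Complex.exp (a * t) :=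
      setIntegral_congr_fun measurableSet_Iic fun t ht =>
        indicator_of_mem (mem_Iic.2 (le_trans ht hx)) _
    rw [indicator_of_mem (mem_Iic.2 hx), hprim, integral_exp_mul_complex_Iic (by simpa using ha)]
    simp [truncatedExp, hx, div_eq_inv_mul]
  · simp [truncatedExp, hx]

theorem inv_le_norm_primitiveIicCLM {ν : ℝ} (hν : 0 < ν) {a : ℝ} (ha : ν < a) :
    a⁻¹ ≤ ‖primitiveIicCLM hν‖ := by
  set g := (memLp_truncatedExp ha).toLp
  have hg : 0 < ‖g‖ := by
    have hsq : eLpNorm (truncatedExp a) 2 (wMeasure ν) ^ 2 ≠ 0 := by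
      rw [sq_eLpNorm_truncatedExp ha, ENNReal.ofReal_ne_zero_iff, inv_pos]
      linarith
    rw [Lp.norm_toLp, ENNReal.toReal_pos_iff]
    exact ⟨pos_of_ne_zero (pow_ne_zero_iff two_ne_zero |>.1 hsq),
      (memLp_truncatedExp ha).eLpNorm_lt_top⟩
  have hprim : primitiveIic g = primitiveIic (truncatedExp a) :=
    primitiveIic_congr_ae ((volume_absolutelyContinuous_wMeasure ν).ae_le
      (memLp_truncatedExp ha).coeFn_toLp)
  have hJg : a⁻¹ * ‖g‖ ≤ ‖primitiveIicCLM hν g‖ := by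
    rw [norm_primitiveIicCLM_apply, hprim, Lp.norm_toLp]
    calc a⁻¹ * (eLpNorm (truncatedExp a) 2 (wMeasure ν)).toReal
        = (eLpNorm ((a : ℂ)⁻¹ • truncatedExp a) 2 (wMeasure ν)).toReal := by
          rw [eLpNorm_const_smul, ENNReal.toReal_mul, toReal_enorm, norm_inv, Complex.norm_real,
            Real.norm_of_nonneg (hν.trans ha).le]
      _ ≤ (eLpNorm (primitiveIic (truncatedExp a)) 2 (wMeasure ν)).toReal := by
          rw [← indicator_primitiveIic_truncatedExp (hν.trans ha)]
          refine ENNReal.toReal_mono ?_ (eLpNorm_indicator_le _)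
          rw [← hprim]
          exact (memLp_primitiveIic hν (Lp.memLp g)).eLpNorm_ne_top
  exact le_of_mul_le_mul_right (hJg.trans ((primitiveIicCLM hν).le_opNorm g)) hg

/-- For `ν > 0`, the map `(Jφ)(x) = ∫_{-∞}^x φ(t) dt` is a well-defined bounded linear
operator on `H_{ν,0}(ℝ)` with operator norm exactly `1/ν`. -/
theorem integration_operator_bounded_norm (ν : ℝ) (hν : 0 < ν) :
    ∃ J : Lp ℂ 2 (wMeasure ν) →L[ℂ] Lp ℂ 2 (wMeasure ν),
      (∀ f : Lp ℂ 2 (wMeasure ν),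
        (J f : ℝ → ℂ) =ᵐ[volume] fun x => ∫ t in Set.Iic x, (f : ℝ → ℂ) t) ∧
      ‖J‖ = 1 / ν := by
  refine ⟨primitiveIicCLM hν, fun f =>
    (volume_absolutelyContinuous_wMeasure ν).ae_le (coeFn_primitiveIicCLM hν f), ?_⟩
  rw [one_div]
  refine le_antisymm (norm_primitiveIicCLM_le hν) ?_
  have hinv : Tendsto (fun a : ℝ => a⁻¹) (𝓝[>] ν) (𝓝 ν⁻¹) :=
    (continuousAt_inv₀ hν.ne').tendsto.mono_left nhdsWithin_le_nhds
  exact le_of_tendsto hinv (eventually_nhdsWithin_of_forall fun a ha =>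
    inv_le_norm_primitiveIicCLM hν ha)
end

section
/- Let ν > 0, a₀ ≥ 0, and φ ∈ H_{ν,1}(ℝ) (i.e. φ and φ' are in H_{ν,0}(ℝ), with φ continuous). Then Re⟨χ_{(-∞,0]}φ, a₀ φ'⟩_{ν,0} = ν a₀ ∫_{-∞}^0 |φ(t)|² e^{-2νt} dt + (1/2) a₀ |φ(0)|², and in particular this quantity is non-negative. -/
open MeasureTheory Complex

/-! Integration by parts on `(-∞, 0]`: the derivative of `‖φ t‖² e^{-2νt}` is
`2 Re(conj (φ t) φ'(t)) e^{-2νt} - 2ν ‖φ t‖² e^{-2νt}`, and `‖φ t‖² e^{-2νt}` tends to `0` at `-∞`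
since both it and its derivative are integrable (`φ, φ' ∈ H_{ν,0}`). Hence
`∫_{-∞}^0 Re(conj φ φ') e^{-2νt} dt = ν ∫_{-∞}^0 |φ|² e^{-2νt} dt + |φ(0)|²/2`, a sum of two
non-negative terms. -/

open Set

theorem integrable_wMeasure_iff {E : Type*} [NormedAddCommGroup E] [NormedSpace ℝ E] {ν : ℝ}
    {g : ℝ → E} :
    Integrable g (wMeasure ν) ↔ Integrable fun t => Real.exp (-2 * ν * t) • g t := by
  rw [wMeasure, integrable_withDensity_iff_integrable_smul' (by fun_prop)
    (ae_of_all _ fun _ => ENNReal.ofReal_lt_top)]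
  simp_rw [ENNReal.toReal_ofReal (Real.exp_nonneg _)]

theorem MeasureTheory.MemLp.integrable_sq_norm_mul_exp {E : Type*} [NormedAddCommGroup E]
    {ν : ℝ} {f : ℝ → E} (hf : MemLp f 2 (wMeasure ν)) :
    Integrable fun t => ‖f t‖ ^ 2 * Real.exp (-2 * ν * t) := by
  simpa only [smul_eq_mul, mul_comm] using
    integrable_wMeasure_iff.1 ((memLp_two_iff_integrable_sq_norm hf.1).1 hf)

theorem MeasureTheory.MemLp.integrable_conj_mul_mul_exp {ν : ℝ} {f g : ℝ → ℂ}
    (hf : MemLp f 2 (wMeasure ν)) (hg : MemLp g 2 (wMeasure ν)) :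
    Integrable fun t => starRingEnd ℂ (f t) * g t * (Real.exp (-2 * ν * t) : ℂ) := by
  refine (integrable_wMeasure_iff.1 (hf.star.integrable_mul hg)).congr (ae_of_all _ fun t => ?_)
  simp only [Pi.mul_apply, Pi.star_apply, RCLike.star_def, real_smul, mul_comm]

theorem Complex.re_conj_mul_mul_ofReal (z w : ℂ) (r : ℝ) :
    (starRingEnd ℂ z * w * r).re = inner ℝ z w * r := by
  rw [re_mul_ofReal, Complex.inner, mul_comm w]

theorem integral_Iic_inner_mul_exp_eq {F : Type*} [NormedAddCommGroup F] [InnerProductSpace ℝ F]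
    {ν a : ℝ} {f f' : ℝ → F} (hf : ∀ t ∈ Iic a, HasDerivAt f (f' t) t)
    (hsq : IntegrableOn (fun t => ‖f t‖ ^ 2 * Real.exp (-2 * ν * t)) (Iic a))
    (hinner : IntegrableOn (fun t => inner ℝ (f t) (f' t) * Real.exp (-2 * ν * t)) (Iic a)) :
    ∫ t in Iic a, inner ℝ (f t) (f' t) * Real.exp (-2 * ν * t) =
      ν * (∫ t in Iic a, ‖f t‖ ^ 2 * Real.exp (-2 * ν * t)) +
        ‖f a‖ ^ 2 * Real.exp (-2 * ν * a) / 2 := by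
  have hderiv : ∀ t ∈ Iic a, HasDerivAt (fun t => ‖f t‖ ^ 2 * Real.exp (-2 * ν * t))
      (2 * (inner ℝ (f t) (f' t) * Real.exp (-2 * ν * t)) -
        2 * ν * (‖f t‖ ^ 2 * Real.exp (-2 * ν * t))) t := fun t ht =>
    ((hf t ht).norm_sq.mul (((hasDerivAt_id t).const_mul (-2 * ν)).exp)).congr_deriv
      (by simp only [id]; ring)
  have hderiv_int := (hinner.const_mul 2).sub (hsq.const_mul (2 * ν))
  have hFTC := integral_Iic_of_hasDerivAt_of_tendsto' hderiv hderiv_int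
    (tendsto_zero_of_hasDerivAt_of_integrableOn_Iic hderiv hderiv_int hsq)
  rw [integral_sub (hinner.const_mul 2) (hsq.const_mul (2 * ν)), integral_const_mul,
    integral_const_mul, sub_zero] at hFTC
  linarith

/-- Let `ν > 0`, `a₀ ≥ 0` and `φ ∈ H_{ν,1}(ℝ)` (i.e. `φ` is differentiable with `φ` and
`φ'` in `H_{ν,0}(ℝ)`).  Then
`Re⟨χ_{(-∞,0]}φ, a₀φ'⟩_{ν,0} = ν a₀ ∫_{-∞}^0 |φ|² e^{-2νt} dt + (a₀/2)|φ(0)|² ≥ 0`. -/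
theorem boundary_term_nonneg (ν a₀ : ℝ) (hν : 0 < ν) (ha₀ : 0 ≤ a₀) (φ φd : ℝ → ℂ)
    (hφ : MemLp φ 2 (wMeasure ν)) (hφd : MemLp φd 2 (wMeasure ν))
    (hderiv : ∀ x, HasDerivAt φ (φd x) x) :
    (∫ t in Set.Iic (0 : ℝ),
        (starRingEnd ℂ) (φ t) * ((a₀ : ℂ) * φd t) * (Real.exp (-2 * ν * t) : ℂ)).re =
      ν * a₀ * (∫ t in Set.Iic (0 : ℝ), ‖φ t‖ ^ 2 * Real.exp (-2 * ν * t)) +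
        (1 / 2) * a₀ * ‖φ 0‖ ^ 2 ∧
    0 ≤ (∫ t in Set.Iic (0 : ℝ),
        (starRingEnd ℂ) (φ t) * ((a₀ : ℂ) * φd t) * (Real.exp (-2 * ν * t) : ℂ)).re := by
  have hprod := hφ.integrable_conj_mul_mul_exp hφd
  have hinner : Integrable fun t => inner ℝ (φ t) (φd t) * Real.exp (-2 * ν * t) :=
    hprod.re.congr (ae_of_all _ fun t => re_conj_mul_mul_ofReal _ _ _)
  have hLHS : (∫ t in Iic (0 : ℝ),
      (starRingEnd ℂ) (φ t) * ((a₀ : ℂ) * φd t) * (Real.exp (-2 * ν * t) : ℂ)).re =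
      a₀ * ∫ t in Iic (0 : ℝ), inner ℝ (φ t) (φd t) * Real.exp (-2 * ν * t) :=
    calc _ = (∫ t in Iic (0 : ℝ),
          (a₀ : ℂ) * (starRingEnd ℂ (φ t) * φd t * (Real.exp (-2 * ν * t) : ℂ))).re := by
          congr 2 with t; ring
      _ = ∫ t in Iic (0 : ℝ),
          ((a₀ : ℂ) * (starRingEnd ℂ (φ t) * φd t * (Real.exp (-2 * ν * t) : ℂ))).re :=
          (integral_re (hprod.const_mul _).integrableOn).symm
      _ = _ := by
          simp_rw [re_ofReal_mul, re_conj_mul_mul_ofReal]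
          exact integral_const_mul _ _
  have hbound := integral_Iic_inner_mul_exp_eq (a := 0) (fun t _ => hderiv t)
    hφ.integrable_sq_norm_mul_exp.integrableOn hinner.integrableOn
  have hsq_nonneg : 0 ≤ ∫ t in Iic (0 : ℝ), ‖φ t‖ ^ 2 * Real.exp (-2 * ν * t) :=
    setIntegral_nonneg measurableSet_Iic fun t _ => by positivity
  rw [hLHS, hbound]
  exact ⟨by simp only [mul_zero, Real.exp_zero, mul_one]; ring, by positivity⟩
end

section
/- Let H be a complex Hilbert space and A a densely defined closed linear operator on H such that Re⟨u, Au⟩ ≥ 0 for all u ∈ D(A) and Re⟨v, A*v⟩ ≥ 0 for all v ∈ D(A*). Let B ∈ L(H) satisfy Re⟨u, Bu⟩ ≥ c₀|u|² for all u ∈ H with c₀ > 0. Then B + A (with domain D(A)) is continuously invertible, with ‖(B+A)^{-1}‖ ≤ 1/c₀. -/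
/-!
Coercivity gives `c₀ ‖u‖ ≤ ‖(B + A) u‖`, hence injectivity and the bound `1 / c₀`. As a bounded
perturbation of a closed operator, `B + A` is closed, so the lower bound makes its range closed.
A vector `w` orthogonal to the range lies in `D(A*)` with `A* w = -B* w`; then
`0 ≤ Re⟨w, A* w⟩ = -Re⟨w, B w⟩ ≤ -c₀ ‖w‖²` forces `w = 0`, so the range is also dense.
-/

section InnerProductSpace

variable {𝕜 E : Type*} [RCLike 𝕜] [NormedAddCommGroup E] [InnerProductSpace 𝕜 E]

theorem mul_norm_le_norm_of_mul_sq_le_re_inner {x y : E} {c : ℝ}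
    (h : c * ‖x‖ ^ 2 ≤ RCLike.re (inner 𝕜 x y)) : c * ‖x‖ ≤ ‖y‖ := by
  rcases eq_or_ne x 0 with rfl | hx
  · simp
  have hpos : 0 < ‖x‖ := norm_pos_iff.mpr hx
  refine le_of_mul_le_mul_right ?_ hpos
  calc c * ‖x‖ * ‖x‖ = c * ‖x‖ ^ 2 := by ring
    _ ≤ RCLike.re (inner 𝕜 x y) := h
    _ ≤ ‖x‖ * ‖y‖ := re_inner_le_norm x y
    _ = ‖y‖ * ‖x‖ := mul_comm _ _

end InnerProductSpace

namespace LinearPMap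

section Normed

variable {𝕜 E F : Type*} [NontriviallyNormedField 𝕜]
  [NormedAddCommGroup E] [NormedSpace 𝕜 E] [NormedAddCommGroup F] [NormedSpace 𝕜 F]

theorem injective_of_mul_norm_le {T : E →ₗ.[𝕜] F} {c : ℝ} (hc : 0 < c)
    (hbound : ∀ x : T.domain, c * ‖(x : E)‖ ≤ ‖T x‖) : Function.Injective T := by
  intro x y hxy
  have hxy' : c * ‖((x - y : T.domain) : E)‖ ≤ 0 := by
    simpa [T.map_sub, hxy] using hbound (x - y)
  have : ‖((x - y : T.domain) : E)‖ ≤ 0 := nonpos_of_mul_nonpos_right hxy' hc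
  exact sub_eq_zero.1 (Subtype.ext (norm_le_zero_iff.1 this))

theorem IsClosed.vadd {T : E →ₗ.[𝕜] F} (hT : T.IsClosed) (B : E →L[𝕜] F) :
    (B.toLinearMap +ᵥ T).IsClosed := by
  have hgraph : ((B.toLinearMap +ᵥ T).graph : Set (E × F)) =
      (fun p : E × F => (p.1, p.2 - B p.1)) ⁻¹' T.graph := by
    ext ⟨x, y⟩
    simp only [SetLike.mem_coe, mem_graph_iff, Set.mem_preimage, vadd_apply, vadd_domain]
    refine exists_congr fun u => and_congr_right fun hu => ?_
    rw [← hu]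
    simp [eq_sub_iff_add_eq, add_comm]
  unfold LinearPMap.IsClosed
  rw [hgraph]
  exact hT.preimage (by fun_prop)

/- The lower bound makes the projection of the (complete) graph onto the second factor
antilipschitz, so its image, the range, is closed. -/
theorem IsClosed.isClosed_range_of_mul_norm_le [CompleteSpace E] [CompleteSpace F]
    {T : E →ₗ.[𝕜] F} (hT : T.IsClosed) {c : ℝ} (hc : 0 < c)
    (hbound : ∀ x : T.domain, c * ‖(x : E)‖ ≤ ‖T x‖) :
    _root_.IsClosed (LinearMap.range T.toFun : Set F) := by
  have : CompleteSpace T.graph := IsClosed.completeSpace_coe (hs := hT)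
  let π : T.graph →L[𝕜] F := (ContinuousLinearMap.snd 𝕜 E F).comp (T.graph.subtypeL)
  have hrange : Set.range π = LinearMap.range T.toFun := by
    ext y
    simp [π]
  have hanti : AntilipschitzWith (max c⁻¹ 1).toNNReal π := by
    refine π.antilipschitz_of_bound fun p => ?_
    obtain ⟨⟨x, y⟩, hp⟩ := p
    obtain ⟨u, rfl, rfl⟩ := (T.mem_graph_iff).1 hp
    show max ‖(u : E)‖ ‖T u‖ ≤ _ * ‖T u‖
    rw [Real.coe_toNNReal _ (by positivity)]
    have hu : ‖(u : E)‖ ≤ c⁻¹ * ‖T u‖ := by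
      rw [inv_mul_eq_div, le_div_iff₀ hc, mul_comm]
      exact hbound u
    refine max_le (hu.trans ?_) (le_mul_of_one_le_left (norm_nonneg _) (le_max_right _ _))
    gcongr
    exact le_max_left _ _
  rw [← hrange]
  exact hanti.isClosed_range π.uniformContinuous

end Normed

section InnerProduct

variable {𝕜 E F : Type*} [RCLike 𝕜] [NormedAddCommGroup E] [InnerProductSpace 𝕜 E]
  [NormedAddCommGroup F] [InnerProductSpace 𝕜 F] [CompleteSpace E] [CompleteSpace F]

theorem mem_graph_adjoint_of_mem_orthogonal_range_vadd {T : E →ₗ.[𝕜] F}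
    (hT : Dense (T.domain : Set E)) (B : E →L[𝕜] F) {w : F}
    (hw : w ∈ (LinearMap.range (B.toLinearMap +ᵥ T).toFun)ᗮ) :
    (w, -(B.adjoint w)) ∈ T†.graph := by
  have hinner : ∀ x : T.domain, inner 𝕜 (-(B.adjoint w)) (x : E) = inner 𝕜 w (T x) := by
    intro x
    have hx : inner 𝕜 w (B x + T x) = 0 :=
      (Submodule.mem_orthogonal' _ _).1 hw _ (LinearMap.mem_range_self _ x)
    rw [inner_add_right] at hx
    rw [inner_neg_left, ContinuousLinearMap.adjoint_inner_left]
    linear_combination -hx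
  have hmem : w ∈ T†.domain := mem_adjoint_domain_of_exists w ⟨_, hinner⟩
  exact (mem_graph_iff _).2 ⟨⟨w, hmem⟩, rfl, adjoint_apply_eq hT _ hinner⟩

end InnerProduct

end LinearPMap

section AccretivePerturbation

variable {H : Type*} [NormedAddCommGroup H] [InnerProductSpace ℂ H]
  {A : H →ₗ.[ℂ] H} {B : H →L[ℂ] H} {c₀ : ℝ}

theorem mul_norm_le_norm_vadd_apply
    (hAacc : ∀ u : A.domain, 0 ≤ (inner ℂ (u : H) (A u) : ℂ).re)
    (hB : ∀ u : H, c₀ * ‖u‖ ^ 2 ≤ (inner ℂ u (B u) : ℂ).re) (u : A.domain) :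
    c₀ * ‖(u : H)‖ ≤ ‖(B.toLinearMap +ᵥ A) u‖ := by
  refine mul_norm_le_norm_of_mul_sq_le_re_inner (𝕜 := ℂ) ?_
  rw [LinearPMap.vadd_apply, ContinuousLinearMap.coe_coe, inner_add_right, RCLike.re_to_complex,
    Complex.add_re]
  linarith [hAacc u, hB u]

variable [CompleteSpace H]

theorem orthogonal_range_vadd_eq_bot (hAdense : Dense (A.domain : Set H))
    (hAadacc : ∀ v : A.adjoint.domain, 0 ≤ (inner ℂ (v : H) (A.adjoint v) : ℂ).re)
    (hc₀ : 0 < c₀) (hB : ∀ u : H, c₀ * ‖u‖ ^ 2 ≤ (inner ℂ u (B u) : ℂ).re) :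
    (LinearMap.range (B.toLinearMap +ᵥ A).toFun)ᗮ = ⊥ := by
  refine (Submodule.eq_bot_iff _).2 fun w hw => ?_
  obtain ⟨v, hv, hAv⟩ := (LinearPMap.mem_graph_iff _).1
    (LinearPMap.mem_graph_adjoint_of_mem_orthogonal_range_vadd hAdense B hw)
  have hre : (inner ℂ w (B.adjoint w)).re = (inner ℂ w (B w)).re := by
    rw [← inner_conj_symm, ContinuousLinearMap.adjoint_inner_left, Complex.conj_re]
  have hnonneg := hAadacc v
  rw [hv, hAv, inner_neg_right, Complex.neg_re, hre] at hnonneg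
  have hsq : ‖w‖ ^ 2 ≤ 0 := nonpos_of_mul_nonpos_right (by linarith [hB w]) hc₀
  exact norm_eq_zero.1 <| (pow_eq_zero_iff two_ne_zero).1 (le_antisymm hsq (sq_nonneg _))

theorem range_vadd_eq_top (hAdense : Dense (A.domain : Set H)) (hAclosed : A.IsClosed)
    (hAacc : ∀ u : A.domain, 0 ≤ (inner ℂ (u : H) (A u) : ℂ).re)
    (hAadacc : ∀ v : A.adjoint.domain, 0 ≤ (inner ℂ (v : H) (A.adjoint v) : ℂ).re)
    (hc₀ : 0 < c₀) (hB : ∀ u : H, c₀ * ‖u‖ ^ 2 ≤ (inner ℂ u (B u) : ℂ).re) :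
    LinearMap.range (B.toLinearMap +ᵥ A).toFun = ⊤ := by
  have hclosed := (hAclosed.vadd B).isClosed_range_of_mul_norm_le hc₀
    (mul_norm_le_norm_vadd_apply hAacc hB)
  rw [← hclosed.submodule_topologicalClosure_eq, Submodule.topologicalClosure_eq_top_iff]
  exact orthogonal_range_vadd_eq_bot hAdense hAadacc hc₀ hB

end AccretivePerturbation

/-- Let `H` be a complex Hilbert space and `A` a densely defined closed operator on `H`
with `Re⟨u, Au⟩ ≥ 0` on `D(A)` and `Re⟨v, A*v⟩ ≥ 0` on `D(A*)`.  Let `B` be bounded with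
`Re⟨u, Bu⟩ ≥ c₀‖u‖²`, `c₀ > 0`.  Then `B + A` (with domain `D(A)`) is continuously
invertible with `‖(B+A)⁻¹‖ ≤ 1/c₀`. -/
theorem accretive_plus_coercive_invertible {H : Type*} [NormedAddCommGroup H]
    [InnerProductSpace ℂ H] [CompleteSpace H]
    (A : H →ₗ.[ℂ] H) (hAdense : Dense (A.domain : Set H)) (hAclosed : A.IsClosed)
    (hAacc : ∀ u : A.domain, 0 ≤ (inner ℂ (u : H) (A u) : ℂ).re)
    (hAadacc : ∀ v : A.adjoint.domain, 0 ≤ (inner ℂ (v : H) (A.adjoint v) : ℂ).re)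
    (B : H →L[ℂ] H) (c₀ : ℝ) (hc₀ : 0 < c₀)
    (hB : ∀ u : H, c₀ * ‖u‖ ^ 2 ≤ (inner ℂ u (B u) : ℂ).re) :
    ∀ g : H, ∃ u : A.domain, B (u : H) + A u = g ∧ ‖(u : H)‖ ≤ (1 / c₀) * ‖g‖ ∧
      ∀ v : A.domain, B (v : H) + A v = g → v = u := by
  intro g
  have hbound := mul_norm_le_norm_vadd_apply hAacc hB
  obtain ⟨u, hu⟩ : g ∈ LinearMap.range (B.toLinearMap +ᵥ A).toFun := by
    rw [range_vadd_eq_top hAdense hAclosed hAacc hAadacc hc₀ hB]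
    exact Submodule.mem_top
  refine ⟨u, hu, ?_, fun v hv => ?_⟩
  · rw [one_div_mul_eq_div, le_div_iff₀ hc₀, mul_comm, ← hu]
    exact hbound u
  · exact LinearPMap.injective_of_mul_norm_le (T := B.toLinearMap +ᵥ A) hc₀ hbound
      (hv.trans hu.symm)
end

section
/- Let ν > 0, r > 1/(2ν), and M: B_ℂ(r,r) → L(H,H) bounded and analytic on the open disc of radius r centred at r, where H is a Hilbert space. Then the operator M(∂₀^{-1}) := L_ν* M(1/(im+ν)) L_ν is a bounded linear operator on H_{ν,0}(ℝ, H) with norm at most sup_{z ∈ B_ℂ(r,r)} ‖M(z)‖. -/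
/-!
Under the Fourier–Laplace transform the operator is multiplication by the symbol
`t ↦ M((it + ν)⁻¹)`. Since `Re (it + ν) = ν > 1/(2r)`, the points `(it + ν)⁻¹` lie in the disc
`B(r, r)`, so the symbol is continuous and bounded by `C`; multiplication by it is then bounded
on `L²` by `C` (Hölder with an `L^∞` factor), and conjugating by the unitary `L` keeps the norm.
-/

open MeasureTheory Complex

open scoped ENNReal

theorem Complex.inv_mem_ball_of_one_lt_two_mul_re {r : ℝ} {w : ℂ} (hr : 0 < r)
    (h : 1 < 2 * r * w.re) : w⁻¹ ∈ Metric.ball (r : ℂ) r := by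
  have hw : w ≠ 0 := by rintro rfl; simp at h; linarith
  have hw' : 0 < ‖w‖ := norm_pos_iff.mpr hw
  have key : ‖1 - r * w‖ < r * ‖w‖ := by
    rw [← sq_lt_sq₀ (norm_nonneg _) (by positivity), mul_pow, ← normSq_eq_norm_sq,
      ← normSq_eq_norm_sq, normSq_apply, normSq_apply]
    simp only [sub_re, one_re, mul_re, ofReal_re, ofReal_im, sub_im, one_im, mul_im]
    nlinarith
  rw [Metric.mem_ball, dist_eq, show w⁻¹ - r = (1 - r * w) / w by field_simp, norm_div,
    div_lt_iff₀ hw']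
  exact key

section MultiplicationOperator

variable {α 𝕜 E F : Type*} [MeasurableSpace α] {μ : Measure α} [NontriviallyNormedField 𝕜]
  [NormedAddCommGroup E] [NormedSpace 𝕜 E] [NormedAddCommGroup F] [NormedSpace 𝕜 F]
  {p : ℝ≥0∞} [Fact (1 ≤ p)]

theorem MeasureTheory.Lp.exists_mulOperator_norm_le {T : α → E →L[𝕜] F}
    (hT : AEStronglyMeasurable T μ) {C : ℝ} (hC : 0 ≤ C) (hTC : ∀ᵐ x ∂μ, ‖T x‖ ≤ C) :
    ∃ A : Lp E p μ →L[𝕜] Lp F p μ, (∀ f, A f =ᵐ[μ] fun x => T x (f x)) ∧ ‖A‖ ≤ C := by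
  let m : Lp (E →L[𝕜] F) ∞ μ := (memLp_top_of_bound hT C hTC).toLp T
  -- Hölder with exponents `(∞, p, p)` for the evaluation pairing `(S, v) ↦ S v`.
  let B := ContinuousLinearMap.id 𝕜 (E →L[𝕜] F)
  refine ⟨B.holderL μ ∞ p p m, fun f => ?_, ?_⟩
  · filter_upwards [B.coeFn_holder (r := p) m f, (memLp_top_of_bound hT C hTC).coeFn_toLp]
      with x hx hm
    exact hx.trans (DFunLike.congr_fun hm (f x))
  · have hm : ‖m‖ ≤ C := by
      rw [Lp.norm_toLp, eLpNorm_exponent_top]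
      exact ENNReal.toReal_le_of_le_ofReal hC (eLpNormEssSup_le_of_ae_bound hTC)
    calc ‖B.holderL μ ∞ p p m‖ ≤ ‖B.holderL μ ∞ p p‖ * ‖m‖ := ContinuousLinearMap.le_opNorm _ _
      _ ≤ 1 * C := by
        gcongr
        exact (B.norm_holderL_le).trans ContinuousLinearMap.norm_id_le
      _ = C := one_mul C

end MultiplicationOperator

/-- Let `ν > 0`, `r > 1/(2ν)` and `M : B_ℂ(r,r) → L(H,H)` bounded (by `C`) and analytic.
With `L` the (`H`-valued) unitary Fourier-Laplace transform, the material law operator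
`M(∂₀⁻¹) = L* M(1/(im+ν)) L` is a bounded linear operator on `H_{ν,0}(ℝ,H)` with norm at
most `sup_{z ∈ B_ℂ(r,r)} ‖M(z)‖`. -/
theorem material_law_operator_bounded {H : Type*} [NormedAddCommGroup H]
    [InnerProductSpace ℂ H] [CompleteSpace H]
    (ν r C : ℝ) (hν : 0 < ν) (hr : 1 / (2 * ν) < r)
    (M : ℂ → (H →L[ℂ] H))
    (hMan : DifferentiableOn ℂ M (Metric.ball (r : ℂ) r))
    (hMbd : ∀ z ∈ Metric.ball (r : ℂ) r, ‖M z‖ ≤ C)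
    (L : Lp H 2 (wMeasure ν) ≃ₗᵢ[ℂ] Lp H 2 (volume : Measure ℝ)) :
    ∃ Mop : Lp H 2 (wMeasure ν) →L[ℂ] Lp H 2 (wMeasure ν),
      (∀ f : Lp H 2 (wMeasure ν),
        (L (Mop f) : ℝ → H) =ᵐ[volume]
          fun t => M ((Complex.I * t + ν)⁻¹) ((L f : ℝ → H) t)) ∧
      ‖Mop‖ ≤ C := by
  have hr' : 1 < 2 * r * ν := by
    rw [div_lt_iff₀ (by positivity)] at hr; linarith
  have hball (t : ℝ) : (I * t + ν)⁻¹ ∈ Metric.ball (r : ℂ) r :=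
    inv_mem_ball_of_one_lt_two_mul_re (lt_trans (by positivity) hr) (by simpa using hr')
  have hC : 0 ≤ C := (norm_nonneg _).trans (hMbd _ (hball 0))
  have hsymbol : Continuous fun t : ℝ => M (I * t + ν)⁻¹ :=
    hMan.continuousOn.comp_continuous
      ((by fun_prop : Continuous fun t : ℝ => I * t + ν).inv₀ fun t h => by
        simpa [hν.ne'] using congrArg re h) hball
  obtain ⟨A, hA, hAC⟩ := Lp.exists_mulOperator_norm_le (p := 2) hsymbol.aestronglyMeasurable hC
    (Filter.Eventually.of_forall fun t => hMbd _ (hball t))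
  refine ⟨(L.symm : Lp H 2 volume →L[ℂ] Lp H 2 (wMeasure ν)) ∘L A ∘L
    (L : Lp H 2 (wMeasure ν) →L[ℂ] Lp H 2 volume), fun f => ?_, ?_⟩
  · simpa using hA (L f)
  · rwa [ContinuousLinearMap.opNorm_linearIsometryEquiv_comp,
      ContinuousLinearMap.opNorm_comp_linearIsometryEquiv]
end
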